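/- Let X be a real Banach space and let π : X → X be a contractive projection (‖π‖ ≤ 1, π² = π) with range Y. Suppose (u,f) is a Flinn pair in X × X* and f does not vanish identically on Y (f ∉ Y^⊥). Then π(u) is a Flinn element of the Banach space Y. -/

import Mathlib

noncomputable section

/-- An operator `T : X → X` is numerically positive if `x*(Tx) ≥ 0` whenever
`(x, x*) ∈ Π(X)`, i.e. `‖x‖ = ‖x*‖ = x*(x) = 1`. -/
def NumPos {X : Type*} [NormedAddCommGroup X] [NormedSpace ℝ X] (T : X →L[ℝ] X) : Prop :=
  ∀ (x : X) (f : StrongDual ℝ X), ‖x‖ = 1 → ‖f‖ = 1 → f x = 1 → 0 ≤ f (T x)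

/-- The set `F(X)` of Flinn elements of `X`: `u ∈ F(X)` iff `u = 0` or there is a
numerically positive (continuous linear) projection of `X` onto the span of `u`. -/
def FlinnSet (X : Type*) [NormedAddCommGroup X] [NormedSpace ℝ X] : Set X :=
  {u | u = 0 ∨ ∃ P : X →L[ℝ] X, P.comp P = P ∧
    LinearMap.range (P : X →ₗ[ℝ] X) = Submodule.span ℝ ({u} : Set X) ∧ NumPos P}

/-- `(u, f)` is a Flinn pair: the rank-one map `f ⊗ u` is a numerically positive
projection onto `[u]`; equivalently `f(u) = 1` and `f(x)·x*(u) ≥ 0` for all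
`(x, x*) ∈ Π(X)`. -/
def FlinnPair {X : Type*} [NormedAddCommGroup X] [NormedSpace ℝ X]
    (u : X) (f : StrongDual ℝ X) : Prop :=
  f u = 1 ∧ ∀ (x : X) (g : StrongDual ℝ X), ‖x‖ = 1 → ‖g‖ = 1 → g x = 1 →
    0 ≤ f x * g u

set_option maxHeartbeats 1000000 in
/-- Flinn's theorem: if `π` is a contractive projection on `X` with range `Y`,
`(u, f)` is a Flinn pair in `X`, and `f ∉ Y^⊥`, then `π(u)` is a Flinn element
of the Banach space `Y`. -/
theorem stmt6 {X : Type*} [NormedAddCommGroup X] [NormedSpace ℝ X] [CompleteSpace X]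
    (π : X →L[ℝ] X) (hcontr : ‖π‖ ≤ 1) (hproj : π.comp π = π)
    (u : X) (f : StrongDual ℝ X) (hf : FlinnPair u f)
    (hperp : ¬ ∀ y ∈ LinearMap.range (π : X →ₗ[ℝ] X), f y = 0) :
    (⟨π u, ⟨u, rfl⟩⟩ : LinearMap.range (π : X →ₗ[ℝ] X)) ∈ FlinnSet ↥(LinearMap.range (π : X →ₗ[ℝ] X)) := by
  classical
  set Y : Submodule ℝ X := LinearMap.range (π : X →ₗ[ℝ] X) with hYdef
  have hfix : ∀ y : Y, π (y : X) = (y : X) := by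
    rintro ⟨y, x, rfl⟩
    exact DFunLike.congr_fun hproj x
  set v : Y := (⟨π u, ⟨u, rfl⟩⟩ : Y) with hv
  -- Key inequality: for (y, g) ∈ Π(Y), f(y) · g(v) ≥ 0.
  have key : ∀ (y : Y) (g : StrongDual ℝ Y), ‖y‖ = 1 → ‖g‖ = 1 → g y = 1 →
      0 ≤ f (y : X) * g v := by
    intro y g hy hg hgy
    set πY : X →L[ℝ] Y := π.codRestrict Y (fun x => LinearMap.mem_range_self _ x) with hπY
    set g' : StrongDual ℝ X := g.comp πY with hg'
    have hπYy : πY (y : X) = y := Subtype.ext (hfix y)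
    have hg'y : g' (y : X) = 1 := by
      rw [hg', ContinuousLinearMap.comp_apply, hπYy, hgy]
    have hg'le : ‖g'‖ ≤ 1 := by
      refine ContinuousLinearMap.opNorm_le_bound _ zero_le_one ?_
      intro x
      have h1 : ‖g (πY x)‖ ≤ ‖g‖ * ‖πY x‖ := g.le_opNorm _
      have h2 : ‖πY x‖ = ‖π x‖ := rfl
      have h3 : ‖π x‖ ≤ ‖π‖ * ‖x‖ := π.le_opNorm x
      have h4 : ‖π‖ * ‖x‖ ≤ 1 * ‖x‖ := by
        have := norm_nonneg x
        nlinarith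
      calc ‖g' x‖ = ‖g (πY x)‖ := rfl
        _ ≤ ‖g‖ * ‖πY x‖ := h1
        _ = ‖π x‖ := by rw [h2, hg, one_mul]
        _ ≤ 1 * ‖x‖ := le_trans h3 h4
    have hycoe : ‖(y : X)‖ = 1 := hy
    have hg'norm : ‖g'‖ = 1 := by
      refine le_antisymm hg'le ?_
      have := g'.le_opNorm (y : X)
      rw [hg'y, hycoe, mul_one] at this
      simpa using this
    have hmain := hf.2 (y : X) g' hycoe hg'norm hg'y
    have hg'u : g' u = g v := by
      rw [hg', ContinuousLinearMap.comp_apply]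
      congr 1
    rwa [hg'u] at hmain
  by_cases hvz : π u = 0
  · exact Or.inl (Subtype.ext hvz)
  · have hvne : v ≠ 0 := fun h => hvz (congrArg Subtype.val h)
    have hvnorm : 0 < ‖v‖ := norm_pos_iff.mpr hvne
    -- f(π u) ≥ 0
    obtain ⟨g₀, hg₀1, hg₀v⟩ := exists_dual_vector ℝ v hvnorm.ne'
    have hg₀v' : g₀ v = ‖v‖ := by exact_mod_cast hg₀v
    have hc0 : 0 ≤ f (π u) := by
      have hy1 : ‖(‖v‖⁻¹ • v : Y)‖ = 1 := by
        rw [norm_smul, norm_inv, norm_norm, inv_mul_cancel₀ hvnorm.ne']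
      have hgy1 : g₀ (‖v‖⁻¹ • v) = 1 := by
        rw [map_smul, hg₀v', smul_eq_mul, inv_mul_cancel₀ hvnorm.ne']
      have hk := key (‖v‖⁻¹ • v) g₀ hy1 hg₀1 hgy1
      have hcoe : ((‖v‖⁻¹ • v : Y) : X) = ‖v‖⁻¹ • (π u) := rfl
      rw [hcoe, map_smul, hg₀v'] at hk
      have h1 : 0 ≤ ‖v‖⁻¹ * f (π u) * ‖v‖ := by simpa using hk
      have heq : ‖v‖⁻¹ * f (π u) * ‖v‖ = f (π u) := by
        rw [mul_comm, ← mul_assoc, mul_inv_cancel₀ hvnorm.ne', one_mul]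
      linarith [heq ▸ h1]
    -- get w ∈ Y with f(w) > 0
    push_neg at hperp
    obtain ⟨y₀, hy₀mem, hy₀⟩ := hperp
    have hw : ∃ w : Y, 0 < f (w : X) := by
      rcases hy₀.lt_or_gt with h | h
      · refine ⟨-⟨y₀, hy₀mem⟩, ?_⟩
        have : ((-⟨y₀, hy₀mem⟩ : Y) : X) = -y₀ := rfl
        rw [this, map_neg]; linarith
      · exact ⟨⟨y₀, hy₀mem⟩, h⟩
    obtain ⟨w, hwpos⟩ := hw
    -- f(π u) > 0
    have hcpos : 0 < f (π u) := by
      rcases hc0.lt_or_eq with h | h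
      · exact h
      exfalso
      set t : ℝ := -((2 * ‖w‖ + 1) / ‖v‖) with ht
      set z : Y := w + t • v with hz
      have hfz : f (z : X) = f (w : X) := by
        have hcoe : (z : X) = (w : X) + t • (π u) := rfl
        rw [hcoe, map_add, map_smul, ← h, smul_zero, add_zero]
      have hzne : z ≠ 0 := by
        intro h0
        rw [h0] at hfz
        simp at hfz
        rw [← hfz] at hwpos
        exact lt_irrefl 0 hwpos
      have hznorm : 0 < ‖z‖ := norm_pos_iff.mpr hzne
      obtain ⟨g, hg1, hgz⟩ := exists_dual_vector ℝ z hznorm.ne'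
      have hgz' : g z = ‖z‖ := by exact_mod_cast hgz
      have hy1 : ‖(‖z‖⁻¹ • z : Y)‖ = 1 := by
        rw [norm_smul, norm_inv, norm_norm, inv_mul_cancel₀ hznorm.ne']
      have hgy1 : g (‖z‖⁻¹ • z) = 1 := by
        rw [map_smul, hgz', smul_eq_mul, inv_mul_cancel₀ hznorm.ne']
      have hk := key (‖z‖⁻¹ • z) g hy1 hg1 hgy1
      have hcoe : ((‖z‖⁻¹ • z : Y) : X) = ‖z‖⁻¹ • (z : X) := rfl
      rw [hcoe, map_smul] at hk
      have hgv0 : 0 ≤ g v := by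
        have hk' : 0 ≤ ‖z‖⁻¹ * f (z : X) * g v := by simpa using hk
        rw [hfz] at hk'
        nlinarith [mul_pos (inv_pos.mpr hznorm) hwpos]
      have htneg : t < 0 := by
        rw [ht]
        have : 0 < (2 * ‖w‖ + 1) / ‖v‖ := by positivity
        linarith
      -- g w = g z - t * g v ≥ ‖z‖, but g w ≤ ‖w‖ and ‖z‖ ≥ ‖w‖ + 1: contradiction
      have hgw : g w = ‖z‖ - t * g v := by
        have : g z = g w + t * g v := by
          rw [hz, map_add, map_smul, smul_eq_mul]
        rw [← hgz']; linarith
      have hgwle : g w ≤ ‖w‖ := by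
        have := g.le_opNorm w
        rw [hg1, one_mul] at this
        exact le_trans (le_abs_self _) this
      have hzge : 2 * ‖w‖ + 1 - ‖w‖ ≤ ‖z‖ := by
        have h1 : ‖(t • v : Y)‖ - ‖w‖ ≤ ‖z‖ := by
          have := norm_sub_le z w
          have hsub : z - w = t • v := by rw [hz]; abel
          rw [hsub] at this
          linarith
        have h2 : ‖(t • v : Y)‖ = (2 * ‖w‖ + 1) := by
          rw [norm_smul, ht, norm_neg, Real.norm_eq_abs, abs_div, abs_of_nonneg (by positivity),
            abs_of_nonneg hvnorm.le, div_mul_cancel₀ _ hvnorm.ne']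
        linarith
      nlinarith
    -- Build the projection P : Y →L[ℝ] Y
    set c : ℝ := f (π u) with hcdef
    have hfv : f (v : X) = c := rfl
    set P : Y →L[ℝ] Y := (c⁻¹ • (f.comp Y.subtypeL)).smulRight v with hP
    have hPapp : ∀ y : Y, P y = (c⁻¹ * f (y : X)) • v := by
      intro y
      rw [hP, ContinuousLinearMap.smulRight_apply]
      congr 1
    have hPv : P v = v := by
      rw [hPapp, hfv, inv_mul_cancel₀ hcpos.ne', one_smul]
    refine Or.inr ⟨P, ?_, ?_, ?_⟩
    · have hfsmul : ∀ (a : ℝ), f (((a • v : Y) : X)) = a * c := by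
        intro a
        have hco : ((a • v : Y) : X) = a • (π u) := rfl
        rw [hco, map_smul, smul_eq_mul, ← hcdef]
      refine ContinuousLinearMap.ext fun y => ?_
      rw [ContinuousLinearMap.comp_apply, hPapp y, hPapp, hfsmul]
      congr 1
      field_simp
    · apply le_antisymm
      · rintro _ ⟨y, rfl⟩
        rw [Submodule.mem_span_singleton]
        exact ⟨c⁻¹ * f (y : X), (hPapp y).symm⟩
      · rw [Submodule.span_le, Set.singleton_subset_iff]
        exact ⟨v, hPv⟩
    · intro y g hy hg hgy
      rw [hPapp, map_smul, smul_eq_mul]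
      have hk := key y g hy hg hgy
      have : 0 ≤ c⁻¹ * (f (y : X) * g v) := by
        apply mul_nonneg (inv_nonneg.mpr hcpos.le) hk
      linarith [this, mul_assoc c⁻¹ (f (y : X)) (g v)]
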